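/- Let A = 1/(2(1 + π²/3)) and λ ≥ 0, and let C_l = A · (l!)^λ / l² for l ≥ 1. Then for all integers m ≥ 1 and 1 ≤ k ≤ m, Σ C_{l_1} · C_{l_2} ⋯ C_{l_k} ≤ C_m, where the sum runs over all k-tuples (l_1, …, l_k) of integers with each l_i ≥ 1 and l_1 + ⋯ + l_k = m. -/

import Mathlib

/-!
Splitting off the first entry of a tuple writes the `k`-fold sum as a convolution of `C` with the
`(k-1)`-fold sum, so by induction on `k` it suffices that `∑_{a+b=m} C_a C_b ≤ C_m`.
There `a! b! ≤ m!` and `1/(a²b²) = (1/a + 1/b)²/m² ≤ 2 (1/a² + 1/b²)/m²`, so the convolution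
is at most `2A² (m!)^λ/m² · 2ζ(2) = (2π²A/3) C_m`, and `2π²A/3 < 1` for the given `A`.
-/

open Finset Real
open scoped Nat

theorem Finset.Nat.sum_prod_antidiagonalTuple_succ {R : Type*} [CommSemiring R]
    (f : ℕ → R) (k n : ℕ) :
    ∑ t ∈ antidiagonalTuple (k + 1) n, ∏ i, f (t i) =
      ∑ p ∈ antidiagonal n, f p.1 * ∑ s ∈ antidiagonalTuple k p.2, ∏ i, f (s i) := by
  simp_rw [mul_sum, sum_sigma']
  refine sum_nbij' (fun t => ⟨(t 0, ∑ i : Fin k, t i.succ), Fin.tail t⟩)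
    (fun q => Fin.cons q.1.1 q.2) ?_ ?_ ?_ ?_ ?_
  · intro t ht
    simp_all [Nat.mem_antidiagonalTuple, Fin.sum_univ_succ, Fin.tail]
  · intro q hq
    simp_all [Nat.mem_antidiagonalTuple]
  · intro t _
    exact Fin.cons_self_tail t
  · rintro ⟨⟨a, b⟩, s⟩ hq
    simp_all [Nat.mem_antidiagonalTuple]
  · intro t _
    simp [Fin.prod_univ_succ, Fin.tail]

theorem Finset.Nat.sum_prod_antidiagonalTuple_le {R : Type*} [CommSemiring R] [PartialOrder R]
    [IsOrderedRing R] {f : ℕ → R} (hf : ∀ n, 0 ≤ f n)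
    (hconv : ∀ n, ∑ p ∈ antidiagonal n, f p.1 * f p.2 ≤ f n) {k : ℕ} (hk : 1 ≤ k) (n : ℕ) :
    ∑ t ∈ antidiagonalTuple k n, ∏ i, f (t i) ≤ f n := by
  induction k, hk using Nat.le_induction generalizing n with
  | base => simp
  | succ k _ ih =>
    rw [sum_prod_antidiagonalTuple_succ]
    calc ∑ p ∈ antidiagonal n, f p.1 * ∑ s ∈ antidiagonalTuple k p.2, ∏ i, f (s i)
        ≤ ∑ p ∈ antidiagonal n, f p.1 * f p.2 :=
          sum_le_sum fun p _ => mul_le_mul_of_nonneg_left (ih p.2) (hf p.1)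
      _ ≤ f n := hconv n

theorem Nat.factorial_rpow_mul_factorial_rpow_le {r : ℝ} (hr : 0 ≤ r) (a b : ℕ) :
    (a ! : ℝ) ^ r * (b ! : ℝ) ^ r ≤ ((a + b)! : ℝ) ^ r := by
  rw [← mul_rpow (by positivity) (by positivity)]
  gcongr
  exact_mod_cast Nat.le_of_dvd (Nat.factorial_pos _)
    (Nat.factorial_mul_factorial_dvd_factorial_add a b)

theorem one_div_sq_mul_sq_le {a b : ℝ} (ha : 0 ≤ a) (hb : 0 ≤ b) :
    1 / (a ^ 2 * b ^ 2) ≤ 2 / (a + b) ^ 2 * (1 / a ^ 2 + 1 / b ^ 2) := by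
  rcases ha.eq_or_lt with rfl | ha
  · rw [zero_pow two_ne_zero, zero_mul, div_zero]; positivity
  rcases hb.eq_or_lt with rfl | hb
  · rw [zero_pow two_ne_zero, mul_zero, div_zero]; positivity
  rw [div_add_div _ _ (by positivity) (by positivity), div_mul_div_comm,
    div_le_div_iff₀ (by positivity) (by positivity)]
  have hsq : (a + b) ^ 2 ≤ 2 * (a ^ 2 + b ^ 2) := by nlinarith [sq_nonneg (a - b)]
  nlinarith [mul_le_mul_of_nonneg_right hsq (by positivity : 0 ≤ a ^ 2 * b ^ 2)]

theorem sum_antidiagonal_one_div_sq_add_le (n : ℕ) :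
    ∑ p ∈ antidiagonal n, (1 / (p.1 : ℝ) ^ 2 + 1 / (p.2 : ℝ) ^ 2) ≤ π ^ 2 / 3 := by
  have hrange : ∑ l ∈ range (n + 1), 1 / (l : ℝ) ^ 2 ≤ π ^ 2 / 6 :=
    sum_le_hasSum _ (fun _ _ => by positivity) hasSum_zeta_two
  rw [sum_add_distrib, ← Nat.sum_antidiagonal_swap (f := fun p => 1 / (p.2 : ℝ) ^ 2)]
  simp only [Prod.snd_swap]
  rw [Nat.sum_antidiagonal_eq_sum_range_succ_mk]
  linarith

/-- `C_l` of the paper; at `l = 0` the junk value `x / 0 = 0` makes it vanish. -/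
noncomputable def factorialWeight (A r : ℝ) (l : ℕ) : ℝ := A * (l ! : ℝ) ^ r / (l : ℝ) ^ 2

theorem factorialWeight_zero (A r : ℝ) : factorialWeight A r 0 = 0 := by
  simp [factorialWeight]

theorem factorialWeight_nonneg {A : ℝ} (hA : 0 ≤ A) (r : ℝ) (l : ℕ) :
    0 ≤ factorialWeight A r l := by
  unfold factorialWeight; positivity

theorem factorialWeight_mul_le {A r : ℝ} (hr : 0 ≤ r) {a b : ℕ} :
    factorialWeight A r a * factorialWeight A r b ≤
      A ^ 2 * ((a + b)! : ℝ) ^ r *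
        (2 / ((a + b : ℕ) : ℝ) ^ 2 * (1 / (a : ℝ) ^ 2 + 1 / (b : ℝ) ^ 2)) := by
  calc factorialWeight A r a * factorialWeight A r b
      = A ^ 2 * ((a ! : ℝ) ^ r * (b ! : ℝ) ^ r) * (1 / ((a : ℝ) ^ 2 * (b : ℝ) ^ 2)) := by
        unfold factorialWeight; ring
    _ ≤ _ := by
      push_cast
      gcongr
      · exact Nat.factorial_rpow_mul_factorial_rpow_le hr a b
      · exact one_div_sq_mul_sq_le (Nat.cast_nonneg a) (Nat.cast_nonneg b)

theorem sum_antidiagonal_factorialWeight_mul_le {A r : ℝ} (hA : 0 ≤ A)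
    (hAπ : A * (2 * π ^ 2 / 3) ≤ 1) (hr : 0 ≤ r) (n : ℕ) :
    ∑ p ∈ antidiagonal n, factorialWeight A r p.1 * factorialWeight A r p.2 ≤
      factorialWeight A r n := by
  set B := A ^ 2 * (n ! : ℝ) ^ r * (2 / (n : ℝ) ^ 2)
  calc ∑ p ∈ antidiagonal n, factorialWeight A r p.1 * factorialWeight A r p.2
      ≤ ∑ p ∈ antidiagonal n, B * (1 / (p.1 : ℝ) ^ 2 + 1 / (p.2 : ℝ) ^ 2) := by
        refine sum_le_sum fun p hp => ?_
        rw [HasAntidiagonal.mem_antidiagonal] at hp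
        simpa only [B, hp, mul_assoc] using
          factorialWeight_mul_le (A := A) hr (a := p.1) (b := p.2)
    _ = B * ∑ p ∈ antidiagonal n, (1 / (p.1 : ℝ) ^ 2 + 1 / (p.2 : ℝ) ^ 2) := by rw [mul_sum]
    _ ≤ B * (π ^ 2 / 3) := by gcongr; exact sum_antidiagonal_one_div_sq_add_le n
    _ = A * (2 * π ^ 2 / 3) * factorialWeight A r n := by
        simp only [B, factorialWeight]; ring
    _ ≤ factorialWeight A r n := mul_le_of_le_one_left (factorialWeight_nonneg hA r n) hAπ

theorem Finset.sum_filter_forall_one_le_prod_eq {R : Type*} [CommSemiring R] {f g : ℕ → R}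
    (hf : f 0 = 0) (hfg : ∀ l, 1 ≤ l → g l = f l) {k : ℕ} (s : Finset (Fin k → ℕ)) :
    ∑ t ∈ s.filter (fun t => ∀ i, 1 ≤ t i), ∏ i, g (t i) = ∑ t ∈ s, ∏ i, f (t i) := by
  rw [sum_filter]
  refine sum_congr rfl fun t _ => ?_
  split_ifs with ht
  · exact prod_congr rfl fun i _ => hfg _ (ht i)
  · obtain ⟨i, hi⟩ := not_forall.mp ht
    rw [prod_eq_zero (mem_univ i) (by rw [Nat.lt_one_iff.mp (not_le.mp hi), hf])]

/-- Iterated form (2.13) of the key lemma: the sum of `C_{l₁} ⋯ C_{l_k}` over all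
`k`-tuples of positive integers with `l₁ + ⋯ + l_k = m` is at most `C_m`. -/
theorem stmt_6 (lam : ℝ) (hlam : 0 ≤ lam)
    (A : ℝ) (hA : A = 1 / (2 * (1 + Real.pi ^ 2 / 3)))
    (C : ℕ → ℝ)
    (hC : ∀ l : ℕ, 1 ≤ l → C l = A * (l.factorial : ℝ) ^ lam / (l : ℝ) ^ 2) :
    ∀ m k : ℕ, 1 ≤ k → k ≤ m →
      ∑ t ∈ (Finset.Nat.antidiagonalTuple k m).filter (fun t => ∀ i, 1 ≤ t i),
        ∏ i, C (t i) ≤ C m := by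
  intro m k hk hkm
  have hCw : ∀ l, 1 ≤ l → C l = factorialWeight A lam l := hC
  have hA0 : 0 ≤ A := by rw [hA]; positivity
  have hAπ : A * (2 * π ^ 2 / 3) ≤ 1 := by
    rw [hA, one_div, inv_mul_le_iff₀ (by positivity)]
    linarith
  rw [sum_filter_forall_one_le_prod_eq (factorialWeight_zero A lam) hCw, hCw m (hk.trans hkm)]
  exact Nat.sum_prod_antidiagonalTuple_le (factorialWeight_nonneg hA0 lam)
    (sum_antidiagonal_factorialWeight_mul_le hA0 hAπ hlam) hk m
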